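/- arXiv:2503.01848 — 3 statements merged into one kernel-verified Lean document; each statement's English description precedes it below -/
import Mathlib

section
/- An implicative-ortholattice X is an implicative-orthomodular lattice if and only if for all x, y ∈ X, x ∧_Q y* = 0 implies x ∧_Q y = x. -/
/-- A BE algebra: (X, →, 1) with the four BE axioms. -/
class BEAlgebra (X : Type*) where
  imp : X → X → X
  one : X
  be1 : ∀ x : X, imp x x = one
  be2 : ∀ x : X, imp x one = one
  be3 : ∀ x : X, imp one x = x
  be4 : ∀ x y z : X, imp x (imp y z) = imp y (imp x z)

/-- A bounded BE algebra: there is 0 with 0 → x = 1 for all x. -/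
class BoundedBEAlgebra (X : Type*) extends BEAlgebra X where
  zero : X
  bound : ∀ x : X, imp zero x = one

/-- The negation x* = x → 0. -/
def bstar {X : Type*} [BoundedBEAlgebra X] (x : X) : X :=
  BEAlgebra.imp x BoundedBEAlgebra.zero

/-- An involutive BE algebra: x** = x. -/
class InvolutiveBEAlgebra (X : Type*) extends BoundedBEAlgebra X where
  invol : ∀ x : X, bstar (bstar x) = x

/-- An implicative-ortholattice: an implicative involutive BE algebra,
    i.e. (x → y) → x = x. -/
class ImplicativeOrtholattice (X : Type*) extends InvolutiveBEAlgebra X where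
  impl : ∀ x y : X, imp (imp x y) x = x

open BEAlgebra BoundedBEAlgebra

variable {X : Type*}

/-- x ∨_Q y = (x → y) → y. -/
def veeQ [BEAlgebra X] (x y : X) : X := imp (imp x y) y

/-- x ∧_Q y = ((x* → y*) → y*)*. -/
def wedgeQ [InvolutiveBEAlgebra X] (x y : X) : X :=
  bstar (imp (imp (bstar x) (bstar y)) (bstar y))

/-- x ≤_L y iff x = (x → y*)*. -/
def leL [InvolutiveBEAlgebra X] (x y : X) : Prop := x = bstar (imp x (bstar y))

/-- x ≤_Q y iff x = x ∧_Q y. -/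
def leQ [InvolutiveBEAlgebra X] (x y : X) : Prop := x = wedgeQ x y

/-- An implicative-orthomodular lattice: an i-OL with (IOM) x ∧_Q (y → x) = x. -/
class IOML (X : Type*) extends ImplicativeOrtholattice X where
  iom : ∀ x y : X, wedgeQ x (imp y x) = x


section Aux
variable [ImplicativeOrtholattice X]

private lemma si (x : X) : bstar (bstar x) = x := InvolutiveBEAlgebra.invol x

private lemma contrap (x y : X) : imp x y = imp (bstar y) (bstar x) := by
  conv_lhs => rw [← si y]
  exact be4 x (bstar y) BoundedBEAlgebra.zero

private lemma bstar_zero : bstar (BoundedBEAlgebra.zero : X) = BEAlgebra.one :=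
  be1 BoundedBEAlgebra.zero

private lemma bstar_one : bstar (BEAlgebra.one : X) = BoundedBEAlgebra.zero :=
  be3 BoundedBEAlgebra.zero

private lemma wedge_star (x y : X) :
    wedgeQ x (bstar y) = bstar (imp (imp (bstar x) y) y) := by
  unfold wedgeQ; rw [si]

end Aux

theorem stmt11 [ImplicativeOrtholattice X] :
    (∀ x y : X, wedgeQ x (imp y x) = x) ↔
      (∀ x y : X, wedgeQ x (bstar y) = BoundedBEAlgebra.zero → wedgeQ x y = x)  := by
  constructor
  · intro iom x y h
    rw [wedge_star] at h
    have h1 : imp (imp (bstar x) y) y = BEAlgebra.one := by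
      have h' := congrArg bstar h
      rwa [si, bstar_zero] at h'
    have h2 := iom y (bstar x)
    unfold wedgeQ at h2
    have h3 : imp (bstar y) (bstar (imp (bstar x) y)) = BEAlgebra.one := by
      rw [← contrap]; exact h1
    rw [h3, be3, si] at h2
    have h4 : imp (bstar y) x = y := by
      rw [contrap (bstar y) x, si]; exact h2
    have h5 := iom x (bstar y)
    rwa [h4] at h5
  · intro cond x y
    apply cond x (imp y x)
    rw [wedge_star]
    have h1 : imp (bstar x) (imp y x) = imp y x := by
      rw [be4]
      have L4 : imp (bstar x) x = x := ImplicativeOrtholattice.impl x BoundedBEAlgebra.zero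
      rw [L4]
    rw [h1, be1]
    exact bstar_one
end

section
/- An implicative-ortholattice X is an implicative-orthomodular lattice if and only if (x→y) → (y ∧_Q x) = x for all x, y ∈ X. -/
open BEAlgebra BoundedBEAlgebra

variable {X : Type*}

lemma swap' [InvolutiveBEAlgebra X] (a b : X) :
    imp a (bstar b) = imp b (bstar a) := by
  unfold bstar; exact be4 a b zero

lemma contrap_s13 [InvolutiveBEAlgebra X] (a b : X) :
    imp (bstar a) (bstar b) = imp b a := by
  rw [swap', InvolutiveBEAlgebra.invol]

theorem stmt13 [ImplicativeOrtholattice X] :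
    (∀ x y : X, wedgeQ x (imp y x) = x) ↔
      (∀ x y : X, imp (imp x y) (wedgeQ y x) = x) := by
  constructor
  · intro h x y
    have h1 := h (bstar x) (bstar y)
    unfold wedgeQ at h1 ⊢
    rw [contrap_s13 y x, InvolutiveBEAlgebra.invol] at h1
    -- h1 : bstar (imp (imp x (bstar (imp x y))) (bstar (imp x y))) = bstar x
    have h2 := congrArg bstar h1
    rw [InvolutiveBEAlgebra.invol, InvolutiveBEAlgebra.invol] at h2
    -- h2 : imp (imp x (bstar (imp x y))) (bstar (imp x y)) = x
    rw [swap' x (imp x y)] at h2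
    rw [contrap_s13 y x, ← swap' (imp (imp x y) (bstar x)) (imp x y)]
    exact h2
  · intro h x y
    have h1 := h (bstar x) (bstar y)
    unfold wedgeQ at h1 ⊢
    rw [contrap_s13 x y, InvolutiveBEAlgebra.invol, InvolutiveBEAlgebra.invol] at h1
    -- h1 : imp (imp y x) (bstar (imp (imp y x) x)) = bstar x
    rw [contrap_s13 x (imp y x), swap' (imp (imp y x) x) (imp y x), h1, InvolutiveBEAlgebra.invol]
end

section
/- In an implicative-orthomodular lattice X, for all a, x ∈ X: φ_a x = x if and only if x ≤_L a, and φ_a x = 0 if and only if x ≤_L a*. -/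
open BEAlgebra BoundedBEAlgebra

variable {X : Type*}

section Aux

variable [IOML X]

lemma ssx (p : X) : bstar (bstar p) = p := InvolutiveBEAlgebra.invol p

lemma star_injx {p q : X} (h : bstar p = bstar q) : p = q := by
  rw [← ssx p, h, ssx]

/-- Contraposition: p → q* = q → p*. -/
lemma contrap1 (p q : X) : imp p (bstar q) = imp q (bstar p) :=
  BEAlgebra.be4 p q BoundedBEAlgebra.zero

/-- Contraposition: p → q = q* → p*. -/
lemma contrap2 (p q : X) : imp p q = imp (bstar q) (bstar p) := by
  conv_lhs => rw [← ssx q]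
  exact contrap1 p (bstar q)

/-- b* → b = b. -/
lemma star_impx (b : X) : imp (bstar b) b = b :=
  ImplicativeOrtholattice.impl b BoundedBEAlgebra.zero

/-- Raw IOM with the outer star removed. -/
lemma iomraw (x y : X) :
    imp (imp (bstar x) (bstar (imp y x))) (bstar (imp y x)) = bstar x := by
  have h := IOML.iom x y
  unfold wedgeQ at h
  have h2 := congrArg bstar h
  rw [ssx] at h2
  exact h2

/-- IOM restated: ((y→x)→x) → (y→x)* = x*. -/
lemma iom' (x y : X) :
    imp (imp (imp y x) x) (bstar (imp y x)) = bstar x := by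
  have h := iomraw x y
  rw [contrap1 (bstar x) (imp y x), ssx] at h
  exact h

/-- Key identity: (u → (u→b)*) → (u→b)* = u. -/
lemma keyG (u b : X) :
    imp (imp u (bstar (imp u b))) (bstar (imp u b)) = u := by
  have h := iomraw (bstar u) (bstar b)
  rw [ssx] at h
  have e : imp (bstar b) (bstar u) = imp u b := by
    rw [contrap1 (bstar b) u, ssx]
  rw [e] at h
  exact h

lemma fwd1 (u b : X) (h : imp (imp u b) b = u) : imp (bstar b) u = u := by
  conv_lhs => rw [← h]
  rw [BEAlgebra.be4, star_impx, h]

lemma bwd1 (u b : X) (h : imp (bstar b) u = u) : imp (imp u b) b = u := by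
  have hu : imp (bstar u) b = u := by
    rw [← ssx b, contrap1 (bstar u) (bstar b), ssx]
    exact h
  have H : imp (imp u b) (bstar u) = bstar b := by
    have h5 := iom' b (bstar u)
    rw [hu] at h5
    exact h5
  have Hb : imp u (bstar (imp u b)) = bstar b := by
    rw [contrap1 u (imp u b)]
    exact H
  have hb : b = bstar (imp u (bstar (imp u b))) := by rw [Hb, ssx]
  calc imp (imp u b) b
      = imp (imp u b) (bstar (imp u (bstar (imp u b)))) := by rw [← hb]
    _ = imp (imp u (bstar (imp u b))) (bstar (imp u b)) := contrap1 _ _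
    _ = u := keyG u b

lemma fwd2 (u b : X) (h : imp b u = u) :
    imp (imp u b) b = BEAlgebra.one := by
  have e : imp u b = b := by
    conv_lhs => rw [← h]
    exact ImplicativeOrtholattice.impl b u
  rw [e, BEAlgebra.be1]

lemma bwd2 (u b : X) (h : imp (imp u b) b = BEAlgebra.one) :
    imp b u = u := by
  have h1 : imp u b = b := by
    have h5 := iom' b u
    rw [h, BEAlgebra.be3] at h5
    exact star_injx h5
  have K := keyG u b
  rw [h1] at K
  have h2 := fwd1 u (bstar b) K
  rw [ssx] at h2
  exact h2

end Aux

theorem stmt18 [IOML X] (a x : X) :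
    (wedgeQ x a = x ↔ leL x a) ∧
      (wedgeQ x a = BoundedBEAlgebra.zero ↔ leL x (bstar a)) := by
  constructor
  · constructor
    · intro h
      have hS : imp (imp (bstar x) (bstar a)) (bstar a) = bstar x := by
        have h2 := congrArg bstar h
        unfold wedgeQ at h2
        rw [ssx] at h2
        exact h2
      have hl := fwd1 (bstar x) (bstar a) hS
      rw [ssx] at hl
      unfold leL
      rw [contrap1 x a, hl, ssx]
    · intro h
      unfold leL at h
      have hl : imp (bstar (bstar a)) (bstar x) = bstar x := by
        rw [ssx, ← contrap1 x a]
        conv_rhs => rw [h]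
        rw [ssx]
      have hS := bwd1 (bstar x) (bstar a) hl
      show bstar (imp (imp (bstar x) (bstar a)) (bstar a)) = x
      rw [hS, ssx]
  · constructor
    · intro h
      have hS : imp (imp (bstar x) (bstar a)) (bstar a) = BEAlgebra.one := by
        have h2 := congrArg bstar h
        unfold wedgeQ at h2
        rw [ssx] at h2
        rw [show bstar (BoundedBEAlgebra.zero : X) = BEAlgebra.one from BEAlgebra.be1 _] at h2
        exact h2
      have h2 := bwd2 (bstar x) (bstar a) hS
      unfold leL
      rw [ssx, contrap2 x a, h2, ssx]
    · intro h
      unfold leL at h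
      rw [ssx] at h
      have h2 : imp (bstar a) (bstar x) = bstar x := by
        rw [← contrap2 x a]
        conv_rhs => rw [h]
        rw [ssx]
      have hS := fwd2 (bstar x) (bstar a) h2
      show bstar (imp (imp (bstar x) (bstar a)) (bstar a)) = BoundedBEAlgebra.zero
      rw [hS]
      exact BEAlgebra.be3 _
end
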